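/- Let A be an n-by-n nonsingular Hermitian matrix and let (λ, x) be an eigenpair of A. Then for any nonzero subspace 𝒦 of ℂ^n, sin∠(x, A𝒦) ≤ |λ_max/λ| · sin∠(x, 𝒦), where A𝒦 = {Ay : y ∈ 𝒦} and λ_max is the largest magnitude eigenvalue of A. -/

import Mathlib

open Matrix

noncomputable def hnorm {n : ℕ} (x : Fin n → ℂ) : ℝ :=
  Real.sqrt ((star x ⬝ᵥ x).re)

noncomputable def cosAngle {n : ℕ} (x y : Fin n → ℂ) : ℝ :=
  ‖star x ⬝ᵥ y‖ / (hnorm x * hnorm y)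

noncomputable def sinAngle {n : ℕ} (x y : Fin n → ℂ) : ℝ :=
  Real.sqrt (1 - cosAngle x y ^ 2)

noncomputable def sinAngleSub {n : ℕ} (x : Fin n → ℂ) (K : Submodule ℂ (Fin n → ℂ)) : ℝ :=
  sInf {s : ℝ | ∃ y ∈ K, y ≠ 0 ∧ s = sinAngle x y}

noncomputable def sinAngleSubSub {n : ℕ} (X K : Submodule ℂ (Fin n → ℂ)) : ℝ :=
  sInf {s : ℝ | ∃ x ∈ X, x ≠ 0 ∧ ∃ y ∈ K, y ≠ 0 ∧ s = sinAngle x y}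

def Eigenpair {n : ℕ} (A : Matrix (Fin n) (Fin n) ℂ) (μ : ℂ) (v : Fin n → ℂ) : Prop :=
  v ≠ 0 ∧ A *ᵥ v = μ • v

noncomputable def specNorm {n : ℕ} (M : Matrix (Fin n) (Fin n) ℂ) : ℝ :=
  sSup {r : ℝ | ∃ v : Fin n → ℂ, hnorm v = 1 ∧ r = hnorm (M *ᵥ v)}

noncomputable def frobNorm {m p : ℕ} (M : Matrix (Fin m) (Fin p) ℂ) : ℝ :=
  Real.sqrt (∑ i, ∑ j, ‖M i j‖ ^ 2)

noncomputable def specCond {n : ℕ} (M : Matrix (Fin n) (Fin n) ℂ) : ℝ :=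
  sSup {r : ℝ | ∃ μ ∈ spectrum ℂ M, r = ‖μ‖} /
    sInf {r : ℝ | ∃ μ ∈ spectrum ℂ M, r = ‖μ‖}

def RitzPair {n : ℕ} (A : Matrix (Fin n) (Fin n) ℂ) (K : Submodule ℂ (Fin n → ℂ))
    (μ : ℂ) (u : Fin n → ℂ) : Prop :=
  u ∈ K ∧ u ≠ 0 ∧ ∀ y ∈ K, star y ⬝ᵥ (A *ᵥ u - μ • u) = 0

def HarmonicRitzPair {n : ℕ} (A : Matrix (Fin n) (Fin n) ℂ) (σ : ℂ)
    (K : Submodule ℂ (Fin n → ℂ)) (θ : ℂ) (v : Fin n → ℂ) : Prop :=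
  v ∈ K ∧ v ≠ 0 ∧ ∀ y ∈ K, star ((A - σ • 1) *ᵥ y) ⬝ᵥ (A *ᵥ v - θ • v) = 0

def THarmonicRitzPair {n : ℕ} (A T : Matrix (Fin n) (Fin n) ℂ) (σ : ℂ)
    (K : Submodule ℂ (Fin n → ℂ)) (θ : ℂ) (v : Fin n → ℂ) : Prop :=
  v ∈ K ∧ v ≠ 0 ∧ ∀ y ∈ K, star ((A - σ • 1) *ᵥ y) ⬝ᵥ (T *ᵥ (A *ᵥ v - θ • v)) = 0

def IsOrthProjOn {n : ℕ} (P : Matrix (Fin n) (Fin n) ℂ)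
    (Q : Submodule ℂ (Fin n → ℂ)) : Prop :=
  P.IsHermitian ∧ P * P = P ∧ (∀ v, P *ᵥ v ∈ Q) ∧ (∀ v ∈ Q, P *ᵥ v = v)

/-!
Decompose `y ∈ 𝒦` as `y = a x + z` with `z ⊥ x`. Since `A` is Hermitian and `A x = λ x`, also
`A y = a λ x + A z` with `A z ⊥ x`, so `sin∠(x, y) = ‖z‖ / ‖y‖` and `sin∠(x, A y) = ‖A z‖ / ‖A y‖`.
For Hermitian `A` the spectral norm is the spectral radius, so `‖A z‖ ≤ |λ_max| ‖z‖`; comparing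
`‖y‖² = |a|² ‖x‖² + ‖z‖²` with `‖A y‖² = |λ|² |a|² ‖x‖² + ‖A z‖²` then gives
`sin∠(x, A y) ≤ |λ_max / λ| sin∠(x, y)` for each `y`, and the bound passes to the infima.
Nonsingularity of `A` guarantees `λ ≠ 0` and `A y ≠ 0`.
-/

section InnerProductSpace

variable {𝕜 E : Type*} [RCLike 𝕜] [NormedAddCommGroup E] [InnerProductSpace 𝕜 E]

lemma norm_smul_add_sq_of_inner_eq_zero {x z : E} (a : 𝕜) (h : inner 𝕜 x z = 0) :
    ‖a • x + z‖ ^ 2 = ‖a‖ ^ 2 * ‖x‖ ^ 2 + ‖z‖ ^ 2 := by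
  have hax : inner 𝕜 (a • x) z = 0 := by rw [inner_smul_left, h, mul_zero]
  rw [sq, norm_add_sq_eq_norm_sq_add_norm_sq_of_inner_eq_zero _ _ hax, norm_smul]
  ring

lemma sqrt_one_sub_sq_norm_inner_div_eq {x z : E} {a : 𝕜} (hx : x ≠ 0) (hy : a • x + z ≠ 0)
    (h : inner 𝕜 x z = 0) :
    √(1 - (‖inner 𝕜 x (a • x + z)‖ / (‖x‖ * ‖a • x + z‖)) ^ 2) = ‖z‖ / ‖a • x + z‖ := by
  have hxy : ‖inner 𝕜 x (a • x + z)‖ = ‖a‖ * ‖x‖ ^ 2 := by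
    rw [inner_add_right, inner_smul_right, h, add_zero, inner_self_eq_norm_sq_to_K, norm_mul]
    norm_cast
    rw [abs_of_nonneg (by positivity)]
  have hx' : ‖x‖ ≠ 0 := norm_ne_zero_iff.mpr hx
  have hy' : ‖a • x + z‖ ≠ 0 := norm_ne_zero_iff.mpr hy
  have hy2 := norm_smul_add_sq_of_inner_eq_zero a h
  rw [← Real.sqrt_sq (div_nonneg (norm_nonneg z) (norm_nonneg (a • x + z))), hxy]
  congr 1
  field_simp
  linarith

end InnerProductSpace

-- The sine bound in coordinates: `s = ‖z‖`, `u = ‖y‖`, `t = ‖A z‖`, `v = ‖A y‖`, `p = ‖a x‖²`.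
lemma div_le_div_mul_div_of_sq_eq {p s t u v l M : ℝ} (hp : 0 ≤ p) (hs : 0 ≤ s) (ht : 0 ≤ t)
    (hu : 0 < u) (hv : 0 < v) (hl : 0 < l) (hu2 : u ^ 2 = p + s ^ 2)
    (hv2 : v ^ 2 = l ^ 2 * p + t ^ 2) (hts : t ≤ M * s) (hlM : l ≤ M) :
    t / v ≤ M / l * (s / u) := by
  have hM : 0 ≤ M := hl.le.trans hlM
  rw [div_mul_div_comm, div_le_div_iff₀ hv (by positivity),
    ← pow_le_pow_iff_left₀ (by positivity) (by positivity) two_ne_zero]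
  have hts2 : t ^ 2 ≤ (M * s) ^ 2 := pow_le_pow_left₀ ht hts 2
  have hlM2 : l ^ 2 ≤ M ^ 2 := pow_le_pow_left₀ hl.le hlM 2
  calc (t * (l * u)) ^ 2 = l ^ 2 * p * t ^ 2 + t ^ 2 * (l ^ 2 * s ^ 2) := by
        rw [mul_pow, mul_pow, hu2]; ring
    _ ≤ l ^ 2 * p * (M * s) ^ 2 + t ^ 2 * (M ^ 2 * s ^ 2) := by gcongr
    _ = (M * s * v) ^ 2 := by rw [mul_pow _ v, hv2]; ring

lemma hnorm_eq_norm_toLp {n : ℕ} (x : Fin n → ℂ) : hnorm x = ‖WithLp.toLp 2 x‖ := by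
  rw [hnorm, EuclideanSpace.norm_eq, dotProduct, Complex.re_sum]
  congr 1
  refine Finset.sum_congr rfl fun i _ => ?_
  simp [Complex.conj_mul', ← Complex.ofReal_pow]

lemma star_dotProduct_eq_inner_toLp {n : ℕ} (x y : Fin n → ℂ) :
    star x ⬝ᵥ y = inner ℂ (WithLp.toLp 2 x) (WithLp.toLp 2 y) := by
  rw [EuclideanSpace.inner_eq_star_dotProduct, dotProduct_comm]

lemma hnorm_pos {n : ℕ} {x : Fin n → ℂ} (hx : x ≠ 0) : 0 < hnorm x := by
  rw [hnorm_eq_norm_toLp, norm_pos_iff, Ne, WithLp.toLp_eq_zero]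
  exact hx

lemma hnorm_smul_add_sq {n : ℕ} {x z : Fin n → ℂ} (a : ℂ) (h : star x ⬝ᵥ z = 0) :
    hnorm (a • x + z) ^ 2 = ‖a‖ ^ 2 * hnorm x ^ 2 + hnorm z ^ 2 := by
  rw [star_dotProduct_eq_inner_toLp] at h
  simp only [hnorm_eq_norm_toLp, WithLp.toLp_add, WithLp.toLp_smul]
  exact norm_smul_add_sq_of_inner_eq_zero a h

lemma exists_eq_smul_add_of_star_dotProduct_eq_zero {n : ℕ} {x : Fin n → ℂ} (hx : x ≠ 0)
    (y : Fin n → ℂ) : ∃ (a : ℂ) (z : Fin n → ℂ), y = a • x + z ∧ star x ⬝ᵥ z = 0 := by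
  have hxx : star x ⬝ᵥ x ≠ 0 := by
    rw [star_dotProduct_eq_inner_toLp, inner_self_ne_zero, Ne, WithLp.toLp_eq_zero]
    exact hx
  refine ⟨(star x ⬝ᵥ y) / (star x ⬝ᵥ x), y - ((star x ⬝ᵥ y) / (star x ⬝ᵥ x)) • x, by abel, ?_⟩
  rw [dotProduct_sub, dotProduct_smul, smul_eq_mul, div_mul_cancel₀ _ hxx, sub_self]

lemma sinAngle_eq_of_eq_smul_add {n : ℕ} {x y z : Fin n → ℂ} {a : ℂ} (hx : x ≠ 0) (hy : y ≠ 0)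
    (hyz : y = a • x + z) (h : star x ⬝ᵥ z = 0) : sinAngle x y = hnorm z / hnorm y := by
  subst hyz
  rw [star_dotProduct_eq_inner_toLp] at h
  have hy' : a • WithLp.toLp 2 x + WithLp.toLp 2 z ≠ 0 := by
    rwa [← WithLp.toLp_smul, ← WithLp.toLp_add, Ne, WithLp.toLp_eq_zero]
  have key := sqrt_one_sub_sq_norm_inner_div_eq (by simpa using hx) hy' h
  rw [← WithLp.toLp_smul, ← WithLp.toLp_add] at key
  rwa [sinAngle, cosAngle, hnorm_eq_norm_toLp, hnorm_eq_norm_toLp, hnorm_eq_norm_toLp,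
    star_dotProduct_eq_inner_toLp]

lemma Matrix.IsHermitian.star_dotProduct_mulVec_eq_zero {n : ℕ} {A : Matrix (Fin n) (Fin n) ℂ}
    (hA : A.IsHermitian) {l : ℂ} {x z : Fin n → ℂ} (hx : A *ᵥ x = l • x)
    (hz : star x ⬝ᵥ z = 0) : star x ⬝ᵥ (A *ᵥ z) = 0 := by
  rw [dotProduct_mulVec, ← hA.eq, ← star_mulVec, hx, star_smul, smul_dotProduct, hz, smul_zero]

section L2Operator

open scoped Matrix.Norms.L2Operator

lemma l2_opNorm_le_of_forall_eigenpair {n : ℕ} {A : Matrix (Fin n) (Fin n) ℂ}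
    (hA : A.IsHermitian) {M : ℝ} (hM : 0 ≤ M) (h : ∀ μ v, Eigenpair A μ v → ‖μ‖ ≤ M) :
    ‖A‖ ≤ M := by
  have hrad : spectralRadius ℂ A ≤ ENNReal.ofReal M := by
    refine iSup₂_le fun μ hμ => ?_
    rw [← spectrum_toLin', ← Module.End.hasEigenvalue_iff_mem_spectrum] at hμ
    obtain ⟨v, hv⟩ := hμ.exists_hasEigenvector
    have hle := h μ v ⟨hv.2, by simpa [toLin'_apply] using hv.apply_eq_smul⟩
    rw [← ENNReal.ofReal_coe_nnreal, coe_nnnorm]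
    exact ENNReal.ofReal_le_ofReal hle
  rw [hA.isSelfAdjoint.spectralRadius_eq_nnnorm] at hrad
  simpa using ENNReal.toReal_le_of_le_ofReal hM hrad

lemma hnorm_mulVec_le_of_forall_eigenpair {n : ℕ} {A : Matrix (Fin n) (Fin n) ℂ}
    (hA : A.IsHermitian) {M : ℝ} (hM : 0 ≤ M) (h : ∀ μ v, Eigenpair A μ v → ‖μ‖ ≤ M)
    (z : Fin n → ℂ) : hnorm (A *ᵥ z) ≤ M * hnorm z := by
  rw [hnorm_eq_norm_toLp, hnorm_eq_norm_toLp]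
  exact (l2_opNorm_mulVec A (WithLp.toLp 2 z)).trans
    (by gcongr; exact l2_opNorm_le_of_forall_eigenpair hA hM h)

end L2Operator

lemma sinAngle_mulVec_le {n : ℕ} {A : Matrix (Fin n) (Fin n) ℂ} (hA : A.IsHermitian)
    {l : ℂ} {x : Fin n → ℂ} (hx : Eigenpair A l x) (hl : l ≠ 0) {M : ℝ}
    (hAM : ∀ z, hnorm (A *ᵥ z) ≤ M * hnorm z) (hlM : ‖l‖ ≤ M)
    {y : Fin n → ℂ} (hy : y ≠ 0) (hAy : A *ᵥ y ≠ 0) :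
    sinAngle x (A *ᵥ y) ≤ M / ‖l‖ * sinAngle x y := by
  obtain ⟨hx0, hAx⟩ := hx
  obtain ⟨a, z, rfl, hz⟩ := exists_eq_smul_add_of_star_dotProduct_eq_zero hx0 y
  have hAz := hA.star_dotProduct_mulVec_eq_zero hAx hz
  have hAy' : A *ᵥ (a • x + z) = (a * l) • x + A *ᵥ z := by
    rw [mulVec_add, mulVec_smul, hAx, smul_smul]
  rw [sinAngle_eq_of_eq_smul_add hx0 hy rfl hz, sinAngle_eq_of_eq_smul_add hx0 hAy hAy' hAz]
  refine div_le_div_mul_div_of_sq_eq (p := ‖a‖ ^ 2 * hnorm x ^ 2) (by positivity)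
    (Real.sqrt_nonneg _) (Real.sqrt_nonneg _) (hnorm_pos hy) (hnorm_pos hAy)
    (norm_pos_iff.mpr hl) (hnorm_smul_add_sq a hz) ?_ (hAM z) hlM
  rw [hAy', hnorm_smul_add_sq _ hAz, norm_mul]
  ring

lemma sinAngleSub_le_mul_of_forall_exists {n : ℕ} {x : Fin n → ℂ}
    {K L : Submodule ℂ (Fin n → ℂ)} (hK : K ≠ ⊥) {c : ℝ} (hc : 0 ≤ c)
    (h : ∀ y ∈ K, y ≠ 0 → ∃ y' ∈ L, y' ≠ 0 ∧ sinAngle x y' ≤ c * sinAngle x y) :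
    sinAngleSub x L ≤ c * sinAngleSub x K := by
  obtain ⟨y₀, hy₀K, hy₀⟩ := Submodule.exists_mem_ne_zero_of_ne_bot hK
  rw [sinAngleSub, sinAngleSub, ← smul_eq_mul, ← Real.sInf_smul_of_nonneg hc]
  refine le_csInf ⟨_, Set.smul_mem_smul_set ⟨y₀, hy₀K, hy₀, rfl⟩⟩ ?_
  rintro _ ⟨_, ⟨y, hyK, hy, rfl⟩, rfl⟩
  obtain ⟨y', hy'L, hy', hle⟩ := h y hyK hy
  have hbdd : BddBelow {s : ℝ | ∃ y ∈ L, y ≠ 0 ∧ s = sinAngle x y} :=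
    ⟨0, by rintro _ ⟨_, -, -, rfl⟩; exact Real.sqrt_nonneg _⟩
  exact (csInf_le hbdd ⟨y', hy'L, hy', rfl⟩).trans hle

theorem stmt1_sin_subspace_bound_general
    {n : ℕ} (A : Matrix (Fin n) (Fin n) ℂ) (hA : A.IsHermitian) (hdet : IsUnit A.det)
    (l : ℂ) (x : Fin n → ℂ) (hx : Eigenpair A l x)
    (lmax : ℂ)
    (hmaxGe : ∀ μ v, Eigenpair A μ v → ‖μ‖ ≤ ‖lmax‖)
    (K : Submodule ℂ (Fin n → ℂ)) (hK : K ≠ ⊥) :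
    sinAngleSub x (K.map (Matrix.mulVecLin A)) ≤
      ‖lmax / l‖ * sinAngleSub x K := by
  have hinj : Function.Injective A.mulVec :=
    mulVec_injective_iff_isUnit.2 (A.isUnit_iff_isUnit_det.2 hdet)
  have hl : l ≠ 0 := by
    rintro rfl
    exact hx.1 (hinj (by rw [hx.2, zero_smul, mulVec_zero]))
  have hAM := hnorm_mulVec_le_of_forall_eigenpair hA (norm_nonneg lmax) hmaxGe
  rw [norm_div]
  refine sinAngleSub_le_mul_of_forall_exists hK (by positivity) fun y hyK hy => ?_
  have hAy : A *ᵥ y ≠ 0 := fun h => hy (hinj (by rw [h, mulVec_zero]))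
  exact ⟨A *ᵥ y, Submodule.mem_map_of_mem hyK, hAy,
    sinAngle_mulVec_le hA hx hl hAM (hmaxGe l x hx) hy hAy⟩

/-- Corollary 2.2 (sine bound between an eigenvector and the image subspace A𝒦). -/
theorem stmt1_sin_subspace_bound
    {n : ℕ} (A : Matrix (Fin n) (Fin n) ℂ) (hA : A.IsHermitian) (hdet : IsUnit A.det)
    (l : ℂ) (x : Fin n → ℂ) (hx : Eigenpair A l x)
    (lmax : ℂ) (xmax : Fin n → ℂ) (hmax : Eigenpair A lmax xmax)
    (hmaxGe : ∀ μ v, Eigenpair A μ v → ‖μ‖ ≤ ‖lmax‖)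
    (K : Submodule ℂ (Fin n → ℂ)) (hK : K ≠ ⊥) :
    sinAngleSub x (K.map (Matrix.mulVecLin A)) ≤
      ‖lmax / l‖ * sinAngleSub x K :=
  stmt1_sin_subspace_bound_general A hA hdet l x hx lmax hmaxGe K hK
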